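/- arXiv:2107.02062 — 3 statements merged into one kernel-verified Lean document; each statement's English description precedes it below -/
import Mathlib

section
/- With P, d, n and c as in the context, one has the identity of polynomials with rational coefficients P(t) = ∑_{i=0}^{n} (−t)^i · (d! / (i! · (n−i)!)) · c(i). -/
open Polynomial Finset

/-- `d = n₁ + ⋯ + n_r`. -/
def dTot (r : ℕ) (np : ℕ → ℕ) : ℕ := ∑ p ∈ Finset.Icc 1 r, np p

/-- `n = 1·n₁ + 2·n₂ + ⋯ + r·n_r`, the homogeneous dimension. -/
def nHom (r : ℕ) (np : ℕ → ℕ) : ℕ := ∑ p ∈ Finset.Icc 1 r, p * np p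

/-- `P(t) = ∏_{p=1}^{r} (1 − t^p)^{n_p}`. -/
noncomputable def Ppoly (r : ℕ) (np : ℕ → ℕ) : Polynomial ℚ :=
  ∏ p ∈ Finset.Icc 1 r, (1 - X ^ p) ^ np p

/-- `∏_{p=2}^{r} (1 + t + ⋯ + t^{p−1})^{n_p}`, whose coefficients are the `a_l`. -/
noncomputable def Apoly (r : ℕ) (np : ℕ → ℕ) : Polynomial ℚ :=
  ∏ p ∈ Finset.Icc 2 r, (∑ j ∈ Finset.range p, X ^ j) ^ np p

/-- The coefficient `a_l`. -/
noncomputable def aCoeff (r : ℕ) (np : ℕ → ℕ) (l : ℕ) : ℚ := (Apoly r np).coeff l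

/-- `Q_l(i) = ∏_{j=0}^{l−1} (j − i) · ∏_{j=d+l+1}^{n} (j − i)`. -/
def Qval (r : ℕ) (np : ℕ → ℕ) (l : ℕ) (i : ℚ) : ℚ :=
  (∏ j ∈ Finset.range l, ((j : ℚ) - i)) *
    ∏ j ∈ Finset.Icc (dTot r np + l + 1) (nHom r np), ((j : ℚ) - i)

/-- `c(i) = ∑_{l=0}^{n−d} a_l · Q_l(i)`. -/
noncomputable def cVal (r : ℕ) (np : ℕ → ℕ) (i : ℚ) : ℚ :=
  ∑ l ∈ Finset.range (nHom r np - dTot r np + 1), aCoeff r np l * Qval r np l i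

/-!
Since `1 - t ^ p = (1 - t) (1 + t + ⋯ + t ^ (p - 1))`, we have `P = (1 - t) ^ d * A` with
`deg A ≤ n - d`, so by linearity it suffices to expand each `t ^ l (1 - t) ^ d`, `l ≤ n - d`.
There the coefficient of `(-t) ^ (l + m)` is `(-1) ^ l * choose d m`, and
`d! / (i! (n - i)!) * Q_l(i)` reproduces exactly this: `Q_l(i)` vanishes for natural `i`
outside `[l, d + l]`, and inside that window its two products are descending factorials which
cancel against `i!` and `(n - i)!`.
-/

open Nat

section Products

variable {R : Type*} [CommRing R]

lemma prod_range_natCast_sub_natCast (l k : ℕ) :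
    ∏ j ∈ range l, ((j : R) - k) = (-1) ^ l * k.descFactorial l := by
  rw [← descPochhammer_eval_eq_descFactorial, descPochhammer_eval_eq_prod_range]
  simpa using prod_neg (s := range l) fun j ↦ (k : R) - j

lemma prod_Icc_natCast_sub_natCast {k a : ℕ} (hka : k ≤ a) (b : ℕ) :
    ∏ j ∈ Icc (a + 1) b, ((j : R) - k) = ((b - k).descFactorial (b - a) : R) := by
  rcases lt_or_ge b a with hba | hab
  · rw [Icc_eq_empty (by omega), Nat.sub_eq_zero_of_le hba.le]
    simp
  induction b, hab using Nat.le_induction with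
  | base => simp
  | succ b hab ih =>
    rw [prod_Icc_succ_top (by omega), ih, show b + 1 - k = (b - k) + 1 by omega,
      show b + 1 - a = (b - a) + 1 by omega, Nat.succ_descFactorial_succ]
    push_cast [Nat.cast_sub (hka.trans hab)]
    ring

end Products

lemma factorial_div_mul_prod_window {d l m n : ℕ} (hm : m ≤ d) (hn : d + l ≤ n) :
    (d ! : ℚ) / ((l + m)! * (n - (l + m))!) *
        ((∏ j ∈ range l, ((j : ℚ) - (l + m : ℕ))) *
          ∏ j ∈ Icc (d + l + 1) n, ((j : ℚ) - (l + m : ℕ))) =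
      (-1) ^ l * d.choose m := by
  rw [prod_range_natCast_sub_natCast, prod_Icc_natCast_sub_natCast (by omega),
    Nat.cast_choose ℚ hm]
  have hlow := Nat.factorial_mul_descFactorial (show l ≤ l + m by omega)
  have hhigh := Nat.factorial_mul_descFactorial (show n - (d + l) ≤ n - (l + m) by omega)
  rw [show l + m - l = m by omega] at hlow
  rw [show n - (l + m) - (n - (d + l)) = d - m by omega] at hhigh
  rw [← hlow, ← hhigh]
  have hlow_pos : ((l + m).descFactorial l : ℚ) ≠ 0 := by
    exact_mod_cast (descFactorial_pos.2 (by omega)).ne'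
  have hhigh_pos : ((n - (l + m)).descFactorial (n - (d + l)) : ℚ) ≠ 0 := by
    exact_mod_cast (descFactorial_pos.2 (by omega)).ne'
  push_cast
  field_simp

theorem X_pow_mul_one_sub_X_pow_eq_sum {d l n : ℕ} (hn : d + l ≤ n) :
    (X ^ l * (1 - X) ^ d : ℚ[X]) =
      ∑ i ∈ range (n + 1),
        C ((d ! : ℚ) / (i ! * (n - i)!) *
            ((∏ j ∈ range l, ((j : ℚ) - i)) * ∏ j ∈ Icc (d + l + 1) n, ((j : ℚ) - i))) *
          (-X) ^ i := by
  have h_outside : ∀ i ∈ range (n + 1), i ∉ Ico l (d + l + 1) →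
      C ((d ! : ℚ) / (i ! * (n - i)!) *
          ((∏ j ∈ range l, ((j : ℚ) - i)) * ∏ j ∈ Icc (d + l + 1) n, ((j : ℚ) - i))) *
        (-X) ^ i = 0 := by
    intro i hi hi'
    simp only [mem_range, mem_Ico, not_and_or, not_le, not_lt] at hi hi'
    rcases hi' with hil | hil
    · rw [prod_eq_zero (mem_range.2 hil) (sub_self _)]
      simp
    · rw [prod_eq_zero (mem_Icc.2 ⟨hil, by omega⟩) (sub_self _)]
      simp
  rw [← sum_subset (fun i hi ↦ by simp only [mem_Ico, mem_range] at hi ⊢; omega) h_outside,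
    sum_Ico_eq_sum_range, show d + l + 1 - l = d + 1 by omega,
    show (1 - X : ℚ[X]) = -X + 1 by ring, add_pow, mul_sum]
  refine sum_congr rfl fun m hm ↦ ?_
  rw [factorial_div_mul_prod_window (by simpa [Nat.lt_succ_iff] using hm) hn]
  simp only [map_mul, map_pow, map_neg, map_one, map_natCast, one_pow]
  have h_sign : ((-1 : ℚ[X]) ^ l) * (-1) ^ l = 1 := by rw [← mul_pow]; simp
  linear_combination (-(X ^ l * (-X) ^ m * (d.choose m : ℚ[X]))) * h_sign

section Factorization

variable (r : ℕ) (np : ℕ → ℕ)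

lemma dTot_add_sum_pred_mul_eq_nHom :
    dTot r np + ∑ p ∈ Icc 1 r, (p - 1) * np p = nHom r np := by
  rw [dTot, nHom, ← sum_add_distrib]
  refine sum_congr rfl fun p hp ↦ ?_
  obtain ⟨q, rfl⟩ := Nat.exists_eq_add_of_le' (mem_Icc.1 hp).1
  simp only [Nat.add_sub_cancel]
  ring

lemma Apoly_eq_prod_Icc_one :
    Apoly r np = ∏ p ∈ Icc 1 r, (∑ j ∈ range p, (X : ℚ[X]) ^ j) ^ np p := by
  refine prod_subset (Icc_subset_Icc_left one_le_two) fun p hp hp' ↦ ?_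
  rw [show p = 1 by simp only [mem_Icc] at hp hp'; omega]
  simp

lemma Ppoly_eq_one_sub_X_pow_mul_Apoly : Ppoly r np = (1 - X) ^ dTot r np * Apoly r np := by
  rw [Apoly_eq_prod_Icc_one, dTot, ← prod_pow_eq_pow_sum, ← prod_mul_distrib, Ppoly]
  simp only [← mul_pow, mul_neg_geom_sum]

lemma natDegree_Apoly_le : (Apoly r np).natDegree ≤ nHom r np - dTot r np := by
  rw [← dTot_add_sum_pred_mul_eq_nHom, Nat.add_sub_cancel_left, Apoly_eq_prod_Icc_one]
  refine (natDegree_prod_le _ _).trans (sum_le_sum fun p _ ↦ ?_)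
  rw [mul_comm]
  refine natDegree_pow_le_of_le _ (natDegree_sum_le_of_forall_le _ _ fun j hj ↦ ?_)
  exact (natDegree_X_pow_le j).trans (by simp only [mem_range] at hj; omega)

lemma dTot_le_nHom : dTot r np ≤ nHom r np :=
  dTot_add_sum_pred_mul_eq_nHom r np ▸ Nat.le_add_right _ _

end Factorization

theorem stmt1_general (r : ℕ) (np : ℕ → ℕ) :
    Ppoly r np =
      ∑ i ∈ Finset.range (nHom r np + 1),
        Polynomial.C
            (((dTot r np).factorial : ℚ) /
                ((i.factorial : ℚ) * ((nHom r np - i).factorial : ℚ)) *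
              cVal r np (i : ℚ)) *
          (-Polynomial.X) ^ i := by
  have h_expand := as_sum_range_C_mul_X_pow' (Apoly r np)
    (Nat.lt_succ_of_le (natDegree_Apoly_le r np))
  calc Ppoly r np
      = ∑ l ∈ range (nHom r np - dTot r np + 1),
          C (aCoeff r np l) * (X ^ l * (1 - X) ^ dTot r np) := by
        rw [Ppoly_eq_one_sub_X_pow_mul_Apoly, h_expand, mul_sum]
        exact sum_congr rfl fun l _ ↦ by rw [aCoeff]; ring
    _ = ∑ l ∈ range (nHom r np - dTot r np + 1), C (aCoeff r np l) *
          ∑ i ∈ range (nHom r np + 1),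
            C ((dTot r np)! / (i ! * (nHom r np - i)! : ℚ) * Qval r np l i) * (-X) ^ i := by
        refine sum_congr rfl fun l hl ↦ ?_
        have hdn := dTot_le_nHom r np
        rw [X_pow_mul_one_sub_X_pow_eq_sum (n := nHom r np) (by simp only [mem_range] at hl; omega)]
        rfl
    _ = _ := by
        simp only [cVal, mul_sum, map_sum, sum_mul]
        rw [sum_comm]
        refine sum_congr rfl fun i _ ↦ sum_congr rfl fun l _ ↦ ?_
        simp only [map_mul]
        ring

/-- `P(t) = ∑_{i=0}^{n} (−t)^i · (d! / (i!·(n−i)!)) · c(i)` as polynomials over `ℚ`. -/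
theorem stmt1 (r : ℕ) (hr : 1 ≤ r) (np : ℕ → ℕ) :
    Ppoly r np =
      ∑ i ∈ Finset.range (nHom r np + 1),
        Polynomial.C
            (((dTot r np).factorial : ℚ) /
                ((i.factorial : ℚ) * ((nHom r np - i).factorial : ℚ)) *
              cVal r np (i : ℚ)) *
          (-Polynomial.X) ^ i :=
  stmt1_general r np
end

section
/- Let n₁ be a natural number. If the polynomial (1 − t)^{n₁} (1 − t²)(1 − t³) has exactly n₁ + 3 nonzero coefficients, then n₁ = 5 (equivalently, its degree n = n₁ + 5 equals 10). -/
/-!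
Up to the sign `(-1)^k`, the coefficient of `t^k` in `(1 - t)^n (1 - t²)(1 - t³)` is
`z k = C(n,k) - C(n,k-2) + C(n,k-3) - C(n,k-5)`, and `z (n + 5 - k) = - z k` because each factor
`1 - t^m` is antipalindromic. Unimodality and symmetry of binomial coefficients give `z k > 0`
whenever `2k ≤ n + 3` and `n ≥ 6`; the boundary case `2k = n + 3` is an explicit ratio estimate
that fails exactly for `n = 5`. Hence for `n ≥ 6` at most the two middle coefficients vanish and
there are at least `n + 4` nonzero ones, while the cases `n ≤ 5` are a finite computation.
-/

open Polynomial Finset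

theorem Nat.choose_lt_choose_succ {n k : ℕ} (h : 2 * k + 2 ≤ n) :
    n.choose k < n.choose (k + 1) := by
  have hpos : 0 < n.choose k := Nat.choose_pos (by omega)
  have := Nat.choose_succ_right_eq n k
  nlinarith [Nat.sub_add_cancel (show k ≤ n by omega)]

theorem Nat.choose_strictMonoOn (n : ℕ) : StrictMonoOn n.choose (Set.Iic (n / 2)) :=
  strictMonoOn_Iic_of_lt_succ fun _ _ ↦ Nat.choose_lt_choose_succ (by omega)

theorem Nat.choose_lt_choose_of_lt_of_add_lt {n a b : ℕ} (hab : a < b) (h : a + b < n) :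
    n.choose a < n.choose b := by
  by_cases hb : b ≤ n / 2
  · exact Nat.choose_strictMonoOn n (by simp; omega) hb hab
  · rw [← Nat.choose_symm (by omega : b ≤ n)]
    exact Nat.choose_strictMonoOn n (by simp; omega) (by simp; omega) (by omega)

/-- Dividing by `C(2m+7, m+2)`, this is `(m+5)/(m+3) + (m+1)(m+2)/((m+6)(m+7)) < 2`, which becomes
an equality at `m = -1`, where `2m + 7 = 5`. -/
theorem Nat.choose_add_choose_lt_two_mul_choose (m : ℕ) :
    (2 * m + 7).choose (m + 3) + (2 * m + 7).choose m < 2 * (2 * m + 7).choose (m + 2) := by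
  set N := 2 * m + 7
  have h₃ : N.choose (m + 3) * (m + 3) = N.choose (m + 2) * (m + 5) := by
    rw [Nat.choose_succ_right_eq]; congr 1; omega
  have h₂ : N.choose (m + 2) * (m + 2) = N.choose (m + 1) * (m + 6) := by
    rw [Nat.choose_succ_right_eq]; congr 1; omega
  have h₁ : N.choose (m + 1) * (m + 1) = N.choose m * (m + 7) := by
    rw [Nat.choose_succ_right_eq]; congr 1; omega
  have hpos : 0 < N.choose (m + 2) := Nat.choose_pos (by omega)
  have key : (N.choose (m + 3) + N.choose m) * ((m + 3) * (m + 6) * (m + 7)) +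
      N.choose (m + 2) * (8 * m ^ 2 + 44 * m + 36) =
      2 * N.choose (m + 2) * ((m + 3) * (m + 6) * (m + 7)) := by
    zify at h₁ h₂ h₃ ⊢
    linear_combination ((m + 6) * (m + 7) : ℤ) * h₃ - ((m + 3) * (m + 1) : ℤ) * h₂
      - ((m + 3) * (m + 6) : ℤ) * h₁
  refine lt_of_mul_lt_mul_right (a := (m + 3) * (m + 6) * (m + 7)) ?_ (Nat.zero_le _)
  nlinarith

def binom (n : ℕ) (j : ℤ) : ℤ := if 0 ≤ j then (n.choose j.toNat : ℤ) else 0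

section binom

variable {n : ℕ} {i j : ℤ}

@[simp] theorem binom_natCast (n k : ℕ) : binom n k = n.choose k := by simp [binom]

theorem binom_eq_zero_of_neg (hj : j < 0) : binom n j = 0 := if_neg (by omega)

theorem binom_nonneg (n : ℕ) (j : ℤ) : 0 ≤ binom n j := by
  unfold binom; split_ifs <;> positivity

theorem binom_eq_zero_of_lt (hj : n < j) : binom n j = 0 := by
  lift j to ℕ using by omega
  simp [Nat.choose_eq_zero_of_lt (show n < j by omega)]

theorem binom_pos (h₀ : 0 ≤ j) (hn : j ≤ n) : 0 < binom n j := by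
  lift j to ℕ using h₀
  simpa using Nat.choose_pos (show j ≤ n by omega)

theorem binom_symm (n : ℕ) (j : ℤ) : binom n (n - j) = binom n j := by
  rcases lt_or_ge j 0 with hj | hj
  · rw [binom_eq_zero_of_neg hj, binom_eq_zero_of_lt (by omega)]
  rcases lt_or_ge (n : ℤ) j with hjn | hjn
  · rw [binom_eq_zero_of_neg (by omega), binom_eq_zero_of_lt hjn]
  lift j to ℕ using hj
  rw [show (n : ℤ) - j = ((n - j : ℕ) : ℤ) by omega, binom_natCast, binom_natCast,
    Nat.choose_symm (by omega)]

theorem binom_lt_binom (h₀ : 0 ≤ j) (hn : j ≤ n) (hij : i < j) (hsum : i + j < n) :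
    binom n i < binom n j := by
  rcases lt_or_ge i 0 with hi | hi
  · rw [binom_eq_zero_of_neg hi]
    exact binom_pos h₀ hn
  lift i to ℕ using hi
  lift j to ℕ using h₀
  simpa using Nat.choose_lt_choose_of_lt_of_add_lt (n := n) (by omega) (by omega)

theorem binom_le_binom (hij : i ≤ j) (hsum : i + j ≤ n) : binom n i ≤ binom n j := by
  rcases lt_or_ge i 0 with hi | hi
  · rw [binom_eq_zero_of_neg hi]
    exact binom_nonneg n j
  rcases hij.lt_or_eq with hij | rfl
  · rcases hsum.lt_or_eq with hsum | hsum
    · exact (binom_lt_binom (by omega) (by omega) hij hsum).le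
    · rw [← binom_symm n j, show (n : ℤ) - j = i by omega]
  · rfl

end binom

def unsignedCoeff (n : ℕ) (k : ℤ) : ℤ :=
  binom n k - binom n (k - 2) + binom n (k - 3) - binom n (k - 5)

theorem unsignedCoeff_reflect (n : ℕ) (k : ℤ) :
    unsignedCoeff n (n + 5 - k) = -unsignedCoeff n k := by
  simp only [unsignedCoeff]
  rw [← binom_symm n k, ← binom_symm n (k - 2), ← binom_symm n (k - 3), ← binom_symm n (k - 5)]
  ring_nf

theorem unsignedCoeff_eq_zero_of_lt {n : ℕ} {k : ℤ} (hk : n + 5 < k) : unsignedCoeff n k = 0 := by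
  simp only [unsignedCoeff, binom_eq_zero_of_lt (show (n : ℤ) < k by omega),
    binom_eq_zero_of_lt (show (n : ℤ) < k - 2 by omega),
    binom_eq_zero_of_lt (show (n : ℤ) < k - 3 by omega),
    binom_eq_zero_of_lt (show (n : ℤ) < k - 5 by omega)]
  norm_num

theorem unsignedCoeff_pos {n : ℕ} {k : ℤ} (hn : 6 ≤ n) (hk₀ : 0 ≤ k) (hk : 2 * k ≤ n + 3) :
    0 < unsignedCoeff n k := by
  unfold unsignedCoeff
  rcases (by omega : 2 * k ≤ n + 1 ∨ 2 * k = n + 2 ∨ 2 * k = n + 3) with hk | hk | hk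
  · have hhead := binom_lt_binom (n := n) (i := k - 2) hk₀ (by omega) (by omega) (by omega)
    have htail := binom_le_binom (n := n) (i := k - 5) (j := k - 3) (by omega) (by omega)
    linarith
  · have hsymm : binom n k = binom n (k - 2) := by
      rw [← binom_symm n (k - 2), show (n : ℤ) - (k - 2) = k by omega]
    have htail := binom_lt_binom (n := n) (i := k - 5) (j := k - 3) (by omega) (by omega) (by omega)
      (by omega)
    linarith
  · obtain ⟨m, rfl, rfl⟩ : ∃ m : ℕ, k = m + 5 ∧ n = 2 * m + 7 :=
      ⟨(k - 5).toNat, by omega, by omega⟩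
    have hsymm : binom (2 * m + 7) (m + 5) = binom (2 * m + 7) (m + 2 : ℕ) := by
      rw [← binom_symm]; congr 1; push_cast; ring
    rw [hsymm, show (m : ℤ) + 5 - 2 = (m + 3 : ℕ) by push_cast; ring,
      show (m : ℤ) + 5 - 3 = (m + 2 : ℕ) by push_cast; ring,
      show (m : ℤ) + 5 - 5 = (m : ℕ) by ring]
    simp only [binom_natCast]
    have := Nat.choose_add_choose_lt_two_mul_choose m
    omega

theorem le_card_unsignedCoeff_ne_zero {n : ℕ} (hn : 6 ≤ n) :
    n + 4 ≤ #{k ∈ range (n + 6) | unsignedCoeff n (k : ℕ) ≠ 0} := by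
  set m := (n + 4) / 2
  have hcover : range (n + 6) ⊆
      {k ∈ range (n + 6) | unsignedCoeff n (k : ℕ) ≠ 0} ∪ {m, m + 1} := by
    intro k hk
    rw [mem_range] at hk
    by_cases hmid : k = m ∨ k = m + 1
    · simp only [mem_union, mem_insert, mem_singleton]
      tauto
    refine mem_union_left _ (mem_filter.2 ⟨mem_range.2 hk, ?_⟩)
    rcases (by omega : 2 * k ≤ n + 3 ∨ n + 7 ≤ 2 * k) with hlow | hhigh
    · exact (unsignedCoeff_pos hn (by omega) (by omega)).ne'
    · rw [← neg_neg (unsignedCoeff n k), ← unsignedCoeff_reflect, neg_ne_zero]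
      exact (unsignedCoeff_pos hn (by omega) (by omega)).ne'
  suffices n + 6 ≤ #{k ∈ range (n + 6) | unsignedCoeff n (k : ℕ) ≠ 0} + 2 by omega
  calc n + 6 = #(range (n + 6)) := by simp
    _ ≤ #({k ∈ range (n + 6) | unsignedCoeff n (k : ℕ) ≠ 0} ∪ {m, m + 1}) := card_le_card hcover
    _ ≤ #{k ∈ range (n + 6) | unsignedCoeff n (k : ℕ) ≠ 0} + 2 :=
      (card_union_le _ _).trans (by grw [card_le_two])

section Coeff

variable {R : Type*} [CommRing R]

theorem coeff_one_sub_X_pow (n k : ℕ) :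
    ((1 - X : R[X]) ^ n).coeff k = (-1) ^ k * n.choose k := by
  have h : (1 - X : R[X]) ^ n = C ((-1) ^ n) * (X + C (-1)) ^ n := by
    rw [C_pow, ← mul_pow]; congr 1; simp only [map_neg, map_one]; ring
  rw [h, coeff_C_mul, coeff_X_add_C_pow]
  rcases le_or_gt k n with hk | hk
  · rw [← mul_assoc, ← pow_add, show n + (n - k) = k + 2 * (n - k) by omega, pow_add, pow_mul]
    simp
  · simp [Nat.choose_eq_zero_of_lt hk]

theorem coeff_one_sub_X_pow_mul_X_pow (n m k : ℕ) :
    ((1 - X : R[X]) ^ n * X ^ m).coeff k = (-1) ^ (k + m) * (binom n (k - m) : R) := by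
  rw [coeff_mul_X_pow']
  split_ifs with hm
  · rw [coeff_one_sub_X_pow, show (k : ℤ) - m = (k - m : ℕ) by omega, binom_natCast,
      show k + m = k - m + 2 * m by omega, pow_add, pow_mul]
    simp
  · rw [binom_eq_zero_of_neg (by omega)]
    simp

theorem coeff_one_sub_X_pow_mul_one_sub_X_sq_mul_one_sub_X_cube (n k : ℕ) :
    ((1 - X) ^ n * (1 - X ^ 2) * (1 - X ^ 3) : R[X]).coeff k =
      (-1) ^ k * (unsignedCoeff n k : R) := by
  have hsplit : ((1 - X) ^ n * (1 - X ^ 2) * (1 - X ^ 3) : R[X]) =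
      (1 - X) ^ n * X ^ 0 - (1 - X) ^ n * X ^ 2 - (1 - X) ^ n * X ^ 3 + (1 - X) ^ n * X ^ 5 := by
    ring
  rw [hsplit, coeff_add, coeff_sub, coeff_sub]
  simp only [coeff_one_sub_X_pow_mul_X_pow, unsignedCoeff, Nat.cast_ofNat, Nat.cast_zero,
    sub_zero, add_zero]
  push_cast
  ring

theorem card_support_one_sub_X_pow_mul_one_sub_X_sq_mul_one_sub_X_cube [CharZero R] (n : ℕ) :
    #((1 - X) ^ n * (1 - X ^ 2) * (1 - X ^ 3) : R[X]).support =
      #{k ∈ range (n + 6) | unsignedCoeff n (k : ℕ) ≠ 0} := by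
  congr 1
  ext k
  rw [mem_support_iff, coeff_one_sub_X_pow_mul_one_sub_X_sq_mul_one_sub_X_cube, mem_filter,
    mem_range, ne_eq, (isUnit_neg_one.pow k).mul_right_eq_zero, Int.cast_eq_zero]
  have hdeg : unsignedCoeff n k ≠ 0 → k < n + 6 := fun hk ↦ by
    by_contra hlt
    exact hk (unsignedCoeff_eq_zero_of_lt (by omega))
  tauto

end Coeff

/-- If the polynomial `(1 − t)^{n₁} (1 − t²)(1 − t³)` has exactly `n₁ + 3` nonzero
coefficients, then `n₁ = 5` (equivalently, its degree `n = n₁ + 5` equals `10`). -/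
theorem stmt7 (n₁ : ℕ)
    (h : (((1 - X) ^ n₁ * (1 - X ^ 2) * (1 - X ^ 3) : Polynomial ℚ)).support.card = n₁ + 3) :
    n₁ = 5 := by
  rw [card_support_one_sub_X_pow_mul_one_sub_X_sq_mul_one_sub_X_cube] at h
  rcases lt_or_ge n₁ 6 with hn | hn
  · have hsmall : ∀ n < 6, #{k ∈ range (n + 6) | unsignedCoeff n (k : ℕ) ≠ 0} = n + 3 → n = 5 := by
      decide
    exact hsmall n₁ hn h
  · have := le_card_unsignedCoeff_ne_zero hn
    omega
end

section
/- Γ₀ is a lattice in G: as a subset of ℝ⁵ it is discrete, and the quotient topological space G/Γ₀ (the space of left cosets with the quotient topology) is compact. -/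
/-- The simply connected nilpotent Lie group of type `(2,3,5)` in exponential
coordinates: the underlying set is `ℝ⁵`. -/
@[ext]
structure G235 where
  a : ℝ
  b : ℝ
  c : ℝ
  d : ℝ
  e : ℝ

namespace G235

/-- The Baker–Campbell–Hausdorff multiplication. -/
noncomputable instance : Mul G235 :=
  ⟨fun x y =>
    ⟨x.a + y.a, x.b + y.b,
      x.c + y.c + (x.a * y.b - x.b * y.a) / 2,
      x.d + y.d + (x.a * y.c - x.c * y.a) / 2 + (x.a - y.a) * (x.a * y.b - x.b * y.a) / 12,
      x.e + y.e + (x.b * y.c - x.c * y.b) / 2 + (x.b - y.b) * (x.a * y.b - x.b * y.a) / 12⟩⟩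

instance : One G235 := ⟨⟨0, 0, 0, 0, 0⟩⟩

noncomputable instance : Inv G235 := ⟨fun x => ⟨-x.a, -x.b, -x.c, -x.d, -x.e⟩⟩

@[simp] lemma mul_a (x y : G235) : (x * y).a = x.a + y.a := rfl
@[simp] lemma mul_b (x y : G235) : (x * y).b = x.b + y.b := rfl
@[simp] lemma mul_c (x y : G235) :
    (x * y).c = x.c + y.c + (x.a * y.b - x.b * y.a) / 2 := rfl
@[simp] lemma mul_d (x y : G235) :
    (x * y).d = x.d + y.d + (x.a * y.c - x.c * y.a) / 2 +
      (x.a - y.a) * (x.a * y.b - x.b * y.a) / 12 := rfl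
@[simp] lemma mul_e (x y : G235) :
    (x * y).e = x.e + y.e + (x.b * y.c - x.c * y.b) / 2 +
      (x.b - y.b) * (x.a * y.b - x.b * y.a) / 12 := rfl
@[simp] lemma one_a : (1 : G235).a = 0 := rfl
@[simp] lemma one_b : (1 : G235).b = 0 := rfl
@[simp] lemma one_c : (1 : G235).c = 0 := rfl
@[simp] lemma one_d : (1 : G235).d = 0 := rfl
@[simp] lemma one_e : (1 : G235).e = 0 := rfl
@[simp] lemma inv_a (x : G235) : x⁻¹.a = -x.a := rfl
@[simp] lemma inv_b (x : G235) : x⁻¹.b = -x.b := rfl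
@[simp] lemma inv_c (x : G235) : x⁻¹.c = -x.c := rfl
@[simp] lemma inv_d (x : G235) : x⁻¹.d = -x.d := rfl
@[simp] lemma inv_e (x : G235) : x⁻¹.e = -x.e := rfl

/-- The BCH multiplication makes `G235` a group with identity `0` and inverse `-x`. -/
noncomputable instance : Group G235 where
  mul_assoc x y z := by ext <;> simp <;> ring
  one_mul x := by ext <;> simp
  mul_one x := by ext <;> simp
  inv_mul_cancel x := by ext <;> simp <;> ring

/-- `G235` carries the Euclidean topology of `ℝ⁵`. -/
instance : TopologicalSpace G235 :=
  TopologicalSpace.induced (fun x => (x.a, x.b, x.c, x.d, x.e)) inferInstance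

/-- The generator `e₁ = (1,0,0,0,0)`. -/
noncomputable def e1 : G235 := ⟨1, 0, 0, 0, 0⟩

/-- The generator `e₂ = (0,1,0,0,0)`. -/
noncomputable def e2 : G235 := ⟨0, 1, 0, 0, 0⟩

end G235

open G235

/-! Every element of `Γ₀` has `a, b, 2c, 12d, 12e` integral, and no such point other than `1` lies
in the neighbourhood `|a|, |b|, |2c|, |12d|, |12e| < 1` of `1`; hence `Γ₀` is discrete.

For cocompactness, `Γ₀` contains `e₁, e₂, ⁅e₁, e₂⁆, ⁅e₁, ⁅e₁, e₂⁆⁆, ⁅e₂, ⁅e₁, e₂⁆⁆`, and right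
multiplication by an integer power `n` of the `i`-th of these adds `n` to the `i`-th coordinate
while fixing all earlier ones. Adjusting the coordinates one after another therefore moves any
`g` by an element of `Γ₀` into the unit cube `[0, 1]⁵`, which is compact and so surjects onto
`G / Γ₀`. -/

open scoped commutatorElement

lemma eq_zero_of_mem_bot_of_abs_lt_one {R : Type*} [Ring R] [LinearOrder R]
    [IsStrictOrderedRing R] {r : R} (hr : r ∈ (⊥ : Subring R)) (h : |r| < 1) : r = 0 := by
  obtain ⟨n, rfl⟩ := Subring.mem_bot.1 hr
  rw [← Int.cast_abs, ← Int.cast_one, Int.cast_lt, Int.abs_lt_one_iff] at h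
  simp [h]

lemma commutatorElement_mem {G : Type*} [Group G] {H : Subgroup G} {g h : G} (hg : g ∈ H)
    (hh : h ∈ H) : ⁅g, h⁆ ∈ H := by
  rw [commutatorElement_def]
  exact mul_mem (mul_mem (mul_mem hg hh) (inv_mem hg)) (inv_mem hh)

lemma compactSpace_quotient_of_forall_exists_mul_mem {G : Type*} [Group G] [TopologicalSpace G]
    {H : Subgroup G} {K : Set G} (hK : IsCompact K) (hGK : ∀ g, ∃ γ ∈ H, g * γ ∈ K) :
    CompactSpace (G ⧸ H) := by
  have hKH : (QuotientGroup.mk : G → G ⧸ H) '' K = Set.univ := by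
    refine Set.eq_univ_of_forall fun q => ?_
    obtain ⟨g, rfl⟩ := QuotientGroup.mk_surjective q
    obtain ⟨γ, hγ, hgγ⟩ := hGK g
    exact ⟨g * γ, hgγ, QuotientGroup.mk_mul_of_mem g hγ⟩
  rw [← isCompact_univ_iff, ← hKH]
  exact hK.image continuous_quotient_mk'

namespace G235

def toProd : G235 ≃ₜ ℝ × ℝ × ℝ × ℝ × ℝ :=
  Equiv.toHomeomorphOfIsInducing
    ⟨fun x => (x.a, x.b, x.c, x.d, x.e), fun p => ⟨p.1, p.2.1, p.2.2.1, p.2.2.2.1, p.2.2.2.2⟩,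
      fun _ => rfl, fun _ => rfl⟩ ⟨rfl⟩

@[simp] lemma toProd_apply (x : G235) : toProd x = (x.a, x.b, x.c, x.d, x.e) := rfl

@[fun_prop] lemma continuous_a : Continuous a := toProd.continuous.fst
@[fun_prop] lemma continuous_b : Continuous b := toProd.continuous.snd.fst
@[fun_prop] lemma continuous_c : Continuous c := toProd.continuous.snd.snd.fst
@[fun_prop] lemma continuous_d : Continuous d := toProd.continuous.snd.snd.snd.fst
@[fun_prop] lemma continuous_e : Continuous e := toProd.continuous.snd.snd.snd.snd

instance : IsTopologicalGroup G235 where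
  continuous_mul := by
    refine continuous_induced_rng.2 ?_
    simp only [Function.comp_def, mul_a, mul_b, mul_c, mul_d, mul_e]
    fun_prop
  continuous_inv := by
    refine continuous_induced_rng.2 ?_
    simp only [Function.comp_def, inv_a, inv_b, inv_c, inv_d, inv_e]
    fun_prop

/-- In exponential coordinates the one-parameter subgroups are the lines through `0`. -/
def ray (x : G235) (t : ℝ) : G235 := ⟨t * x.a, t * x.b, t * x.c, t * x.d, t * x.e⟩

lemma ray_mul_ray (x : G235) (s t : ℝ) : x.ray s * x.ray t = x.ray (s + t) := by
  ext <;> simp [ray] <;> ring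

lemma ray_one (x : G235) : x.ray 1 = x := by ext <;> simp [ray]

lemma ray_neg_one (x : G235) : x.ray (-1) = x⁻¹ := by ext <;> simp [ray]

lemma zpow_eq_ray (x : G235) (n : ℤ) : x ^ n = x.ray n := by
  induction n using Int.induction_on with
  | zero => ext <;> simp [ray]
  | succ n ih => rw [zpow_add_one, ih, Int.cast_add, Int.cast_one, ← ray_mul_ray, ray_one]
  | pred n ih =>
    rw [zpow_sub_one, ih, Int.cast_sub, Int.cast_one, sub_eq_add_neg, ← ray_mul_ray,
      ray_neg_one]

@[simp] lemma zpow_a (x : G235) (n : ℤ) : (x ^ n).a = n * x.a := by rw [zpow_eq_ray]; rfl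
@[simp] lemma zpow_b (x : G235) (n : ℤ) : (x ^ n).b = n * x.b := by rw [zpow_eq_ray]; rfl
@[simp] lemma zpow_c (x : G235) (n : ℤ) : (x ^ n).c = n * x.c := by rw [zpow_eq_ray]; rfl
@[simp] lemma zpow_d (x : G235) (n : ℤ) : (x ^ n).d = n * x.d := by rw [zpow_eq_ray]; rfl
@[simp] lemma zpow_e (x : G235) (n : ℤ) : (x ^ n).e = n * x.e := by rw [zpow_eq_ray]; rfl

/-- The denominators `2` and `12` are those of the multiplication law. -/
def integralLattice : Subgroup G235 where
  carrier := {x | x.a ∈ (⊥ : Subring ℝ) ∧ x.b ∈ (⊥ : Subring ℝ) ∧ 2 * x.c ∈ (⊥ : Subring ℝ) ∧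
    12 * x.d ∈ (⊥ : Subring ℝ) ∧ 12 * x.e ∈ (⊥ : Subring ℝ)}
  one_mem' := by simp
  mul_mem' := by
    rintro x y ⟨ha, hb, hc, hd, he⟩ ⟨ha', hb', hc', hd', he'⟩
    refine ⟨add_mem ha ha', add_mem hb hb', ?_, ?_, ?_⟩
    · rw [show 2 * (x * y).c = 2 * x.c + 2 * y.c + (x.a * y.b - x.b * y.a) by
        simp only [mul_c]; ring]
      aesop
    · rw [show 12 * (x * y).d = 12 * x.d + 12 * y.d + 3 * (x.a * (2 * y.c) - 2 * x.c * y.a)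
          + (x.a - y.a) * (x.a * y.b - x.b * y.a) by simp only [mul_d]; ring]
      aesop
    · rw [show 12 * (x * y).e = 12 * x.e + 12 * y.e + 3 * (x.b * (2 * y.c) - 2 * x.c * y.b)
          + (x.b - y.b) * (x.a * y.b - x.b * y.a) by simp only [mul_e]; ring]
      aesop
  inv_mem' := by
    rintro x ⟨ha, hb, hc, hd, he⟩
    simpa [mul_neg] using ⟨ha, hb, hc, hd, he⟩

lemma eq_one_of_mem_integralLattice {x : G235} (hx : x ∈ integralLattice)
    (h : |x.a| < 1 ∧ |x.b| < 1 ∧ |2 * x.c| < 1 ∧ |12 * x.d| < 1 ∧ |12 * x.e| < 1) : x = 1 := by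
  obtain ⟨ha, hb, hc, hd, he⟩ := hx
  obtain ⟨ha', hb', hc', hd', he'⟩ := h
  ext
  · exact eq_zero_of_mem_bot_of_abs_lt_one ha ha'
  · exact eq_zero_of_mem_bot_of_abs_lt_one hb hb'
  · simpa using eq_zero_of_mem_bot_of_abs_lt_one hc hc'
  · simpa using eq_zero_of_mem_bot_of_abs_lt_one hd hd'
  · simpa using eq_zero_of_mem_bot_of_abs_lt_one he he'

instance : DiscreteTopology integralLattice := by
  refine discreteTopology_of_isOpen_singleton_one
    ⟨{x | |x.a| < 1 ∧ |x.b| < 1 ∧ |2 * x.c| < 1 ∧ |12 * x.d| < 1 ∧ |12 * x.e| < 1}, ?_, ?_⟩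
  · have hopen {f : G235 → ℝ} (hf : Continuous f) : IsOpen {x | |f x| < 1} :=
      isOpen_lt hf.abs continuous_const
    exact (hopen continuous_a).inter <| (hopen continuous_b).inter <|
      (hopen (by fun_prop)).inter <| (hopen (by fun_prop)).inter (hopen (by fun_prop))
  · ext ⟨x, hx⟩
    refine ⟨fun h => Subtype.ext (eq_one_of_mem_integralLattice hx h), ?_⟩
    rintro ⟨⟩
    simp

noncomputable abbrev Γ₀ : Subgroup G235 := Subgroup.closure {e1, e2}

lemma closure_le_integralLattice : Γ₀ ≤ integralLattice := by
  rw [Subgroup.closure_le]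
  rintro x (rfl | rfl) <;> simp [integralLattice, e1, e2]

lemma commutator_e1_e2 : ⁅e1, e2⁆ = ⟨0, 0, 1, 1 / 2, 1 / 2⟩ := by
  ext <;> simp [commutatorElement_def, e1, e2] <;> norm_num

lemma commutator_e1_commutator_e1_e2 : ⁅e1, ⁅e1, e2⁆⁆ = ⟨0, 0, 0, 1, 0⟩ := by
  ext <;> simp [commutatorElement_def, e1, e2] <;> norm_num

lemma commutator_e2_commutator_e1_e2 : ⁅e2, ⁅e1, e2⁆⁆ = ⟨0, 0, 0, 0, 1⟩ := by
  ext <;> simp [commutatorElement_def, e1, e2] <;> norm_num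

def coord : Fin 5 → G235 → ℝ := ![a, b, c, d, e]

/-- The last three entries are `⁅e1, e2⁆`, `⁅e1, ⁅e1, e2⁆⁆` and `⁅e2, ⁅e1, e2⁆⁆`. -/
noncomputable def malcevBasis : Fin 5 → G235 :=
  ![e1, e2, ⟨0, 0, 1, 1 / 2, 1 / 2⟩, ⟨0, 0, 0, 1, 0⟩, ⟨0, 0, 0, 0, 1⟩]

lemma malcevBasis_mem (i : Fin 5) : malcevBasis i ∈ Γ₀ := by
  have he1 : e1 ∈ Γ₀ := Subgroup.subset_closure (by simp)
  have he2 : e2 ∈ Γ₀ := Subgroup.subset_closure (by simp)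
  have he12 := commutatorElement_mem he1 he2
  fin_cases i
  · exact he1
  · exact he2
  · simpa [malcevBasis, commutator_e1_e2] using he12
  · simpa [malcevBasis, commutator_e1_commutator_e1_e2] using commutatorElement_mem he1 he12
  · simpa [malcevBasis, commutator_e2_commutator_e1_e2] using commutatorElement_mem he2 he12

lemma coord_mul_malcevBasis_zpow_of_lt (g : G235) (n : ℤ) {i j : Fin 5} (hji : j < i) :
    coord j (g * malcevBasis i ^ n) = coord j g := by
  fin_cases i <;> fin_cases j <;> simp_all [coord, malcevBasis, e1, e2]

lemma coord_mul_malcevBasis_zpow_self (g : G235) (n : ℤ) (i : Fin 5) :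
    coord i (g * malcevBasis i ^ n) = coord i g + n := by
  fin_cases i <;> simp [coord, malcevBasis, e1, e2]

lemma exists_mul_coord_mem_Ico (g : G235) {k : ℕ} (hk : k ≤ 5) :
    ∃ γ ∈ Γ₀, ∀ j : Fin 5, (j : ℕ) < k → coord j (g * γ) ∈ Set.Ico 0 1 := by
  induction k with
  | zero => exact ⟨1, one_mem _, fun j hj => absurd hj (Nat.not_lt_zero _)⟩
  | succ k ih =>
    obtain ⟨γ, hγ, hγg⟩ := ih (by omega)
    let i : Fin 5 := ⟨k, by omega⟩
    refine ⟨γ * malcevBasis i ^ (-⌊coord i (g * γ)⌋),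
      mul_mem hγ (zpow_mem (malcevBasis_mem i) _), fun j hj => ?_⟩
    rw [← mul_assoc]
    rcases Nat.lt_succ_iff_lt_or_eq.1 hj with hj | hj
    · rw [coord_mul_malcevBasis_zpow_of_lt _ _ (show j < i from hj)]
      exact hγg j hj
    · rw [show j = i from Fin.ext hj, coord_mul_malcevBasis_zpow_self, Int.cast_neg,
        ← sub_eq_add_neg, Int.self_sub_floor]
      exact ⟨Int.fract_nonneg _, Int.fract_lt_one _⟩

def unitCube : Set G235 := toProd ⁻¹' Set.Icc 0 1

lemma isCompact_unitCube : IsCompact unitCube := toProd.isCompact_preimage.2 isCompact_Icc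

lemma mem_unitCube_iff {x : G235} : x ∈ unitCube ↔ ∀ j, coord j x ∈ Set.Icc 0 1 := by
  simp only [unitCube, Set.mem_preimage, toProd_apply, Set.mem_Icc, Prod.le_def, Prod.fst_zero,
    Prod.snd_zero, Prod.fst_one, Prod.snd_one, Fin.forall_fin_succ, coord, Matrix.cons_val_zero,
    Matrix.cons_val_succ, Matrix.cons_val_fin_one, forall_const, Fin.isValue]
  tauto

lemma exists_mul_mem_unitCube (g : G235) : ∃ γ ∈ Γ₀, g * γ ∈ unitCube := by
  obtain ⟨γ, hγ, hγg⟩ := exists_mul_coord_mem_Ico g le_rfl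
  exact ⟨γ, hγ, mem_unitCube_iff.2 fun j => Set.Ico_subset_Icc_self (hγg j j.2)⟩

end G235

/-- `Γ₀` is a lattice in `G`: it is discrete as a subset of `ℝ⁵`, and the quotient space
`G/Γ₀` of left cosets, with the quotient topology, is compact. -/
theorem stmt13 :
    DiscreteTopology (Subgroup.closure ({e1, e2} : Set G235)) ∧
      CompactSpace (G235 ⧸ Subgroup.closure ({e1, e2} : Set G235)) :=
  ⟨.of_subset (inferInstanceAs (DiscreteTopology integralLattice)) closure_le_integralLattice,
    compactSpace_quotient_of_forall_exists_mul_mem isCompact_unitCube exists_mul_mem_unitCube⟩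
end
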